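/- arXiv:2512.13273 — 2 statements merged into one kernel-verified Lean document; each statement's English description precedes it below -/
import Mathlib

section
/- Let D be a triangulated category with a t-structure 𝒰 = (U^{≤0}, U^{≥0}), let m be a positive integer, and set m-ℋ = U^{≥-(m-1)} ∩ U^{≤0}. Then (m-ℋ[m] * m-ℋ * m-ℋ[-m]) ∩ (m-ℋ * m-ℋ[-m] * m-ℋ[-2m]) = m-ℋ * m-ℋ[-m]. -/
open CategoryTheory Category Limits Pretriangulated

universe v u

variable (D : Type u) [Category.{v} D] [Preadditive D] [HasZeroObject D]
  [HasShift D ℤ] [∀ n : ℤ, (shiftFunctor D n).Additive]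
  [Pretriangulated D] [HasBinaryBiproducts D]

/-- `shiftSet D S n` is the full subcategory `S[n]`: objects isomorphic to `X⟦n⟧`
with `X ∈ S`. -/
def shiftSet (S : Set D) (n : ℤ) : Set D :=
  {A | ∃ B ∈ S, Nonempty (A ≅ B⟦n⟧)}

/-- `starSet D X Y` is `X * Y`: the class of objects `A` admitting a distinguished
triangle `X → A → Y → X[1]` with `X ∈ 𝒳` and `Y ∈ 𝒴`. -/
def starSet (X Y : Set D) : Set D :=
  {A | ∃ (B C : D) (f : B ⟶ A) (g : A ⟶ C) (h : C ⟶ B⟦(1 : ℤ)⟧),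
    B ∈ X ∧ C ∈ Y ∧ Triangle.mk f g h ∈ distTriang D}

/-- `Hom(X, Y) = 0`: every morphism from an object of `X` to an object of `Y` is zero. -/
def homZero (X Y : Set D) : Prop :=
  ∀ A ∈ X, ∀ B ∈ Y, ∀ f : A ⟶ B, f = 0

/-- a class of objects closed under isomorphisms -/
def isoClosed (S : Set D) : Prop :=
  ∀ ⦃A B : D⦄, (A ≅ B) → A ∈ S → B ∈ S

/-- an additive full subcategory (closed under isomorphisms) which is closed under
direct summands -/
structure AdditiveClosed (S : Set D) : Prop where
  iso : isoClosed D S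
  zero : ∀ Z : D, IsZero Z → Z ∈ S
  sum : ∀ A ∈ S, ∀ B ∈ S, (A ⊞ B) ∈ S
  summand : ∀ A ∈ S, ∀ (X : D) (i : X ⟶ A) (p : A ⟶ X), i ≫ p = 𝟙 X → X ∈ S

/-- a torsion pair `(U, V)` in the triangulated category `D` -/
structure IsTorsionPair (U V : Set D) : Prop where
  addU : AdditiveClosed D U
  addV : AdditiveClosed D V
  hom_zero : homZero D U V
  cover : ∀ A : D, A ∈ starSet D U V

/-- `t₁ ≼ t₂` for torsion pairs in a triangulated category: `U₁ ⊆ U₂` and `U₁[1] ⊆ U₂`. -/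
def torsLE (U₁ U₂ : Set D) : Prop :=
  U₁ ⊆ U₂ ∧ shiftSet D U₁ 1 ⊆ U₂

/-- a torsion pair `(T, F)` in an (extension-closed) full subcategory `H` of `D`:
`T` and `F` are additive subcategories of `H` closed under direct summands,
`Hom(T, F) = 0`, and every object of `H` admits a distinguished triangle
`T → X → F → T[1]` with `T ∈ 𝒯`, `F ∈ ℱ`. -/
structure IsTorsionPairIn (H T F : Set D) : Prop where
  subT : T ⊆ H
  subF : F ⊆ H
  isoT : ∀ ⦃A B : D⦄, (A ≅ B) → A ∈ T → B ∈ H → B ∈ T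
  isoF : ∀ ⦃A B : D⦄, (A ≅ B) → A ∈ F → B ∈ H → B ∈ F
  zeroT : ∀ Z : D, IsZero Z → Z ∈ H → Z ∈ T
  zeroF : ∀ Z : D, IsZero Z → Z ∈ H → Z ∈ F
  sumT : ∀ A ∈ T, ∀ B ∈ T, (A ⊞ B) ∈ T
  sumF : ∀ A ∈ F, ∀ B ∈ F, (A ⊞ B) ∈ F
  summandT : ∀ A ∈ T, ∀ (X : D) (i : X ⟶ A) (p : A ⟶ X), i ≫ p = 𝟙 X → X ∈ H → X ∈ T
  summandF : ∀ A ∈ F, ∀ (X : D) (i : X ⟶ A) (p : A ⟶ X), i ≫ p = 𝟙 X → X ∈ H → X ∈ F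
  hom_zero : homZero D T F
  cover : ∀ A ∈ H, A ∈ starSet D T F

/-- an `s`-torsion pair in `H`: a torsion pair with moreover `Hom(T, F[-1]) = 0`. -/
structure IsSTorsionPairIn (H T F : Set D) extends IsTorsionPairIn D H T F : Prop where
  neg_hom_zero : ∀ A ∈ T, ∀ B ∈ F, ∀ f : A ⟶ B⟦(-1 : ℤ)⟧, f = 0

/-- the relation `≼` for torsion pairs in a subcategory `H`:
`Hom(T, F') = 0` and `Hom(T, F'[-1]) = 0`. -/
def torsLEIn (T F' : Set D) : Prop :=
  homZero D T F' ∧ homZero D T (shiftSet D F' (-1))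

/-- a `t`-structure `(L, G) = (S^{≤0}, S^{≥0})` on a triangulated (full) subcategory `S`
of `D` (take `S = Set.univ` for a `t`-structure on `D` itself). -/
structure IsTStructureOn (S L G : Set D) : Prop where
  subL : L ⊆ S
  subG : G ⊆ S
  isoL : ∀ ⦃A B : D⦄, (A ≅ B) → A ∈ L → B ∈ S → B ∈ L
  isoG : ∀ ⦃A B : D⦄, (A ≅ B) → A ∈ G → B ∈ S → B ∈ G
  hom_zero : homZero D L (shiftSet D G (-1))
  cover : ∀ A ∈ S, A ∈ starSet D L (shiftSet D G (-1))
  shiftL : L ⊆ shiftSet D L (-1)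
  shiftG : shiftSet D G (-1) ⊆ G

/-- a `t`-structure `(L, G) = (D^{≤0}, D^{≥0})` on `D`. -/
def IsTStructure (L G : Set D) : Prop := IsTStructureOn D Set.univ L G

/-- a triangulated full subcategory of `D`. -/
structure IsTriangulatedSub (S : Set D) : Prop where
  iso : isoClosed D S
  zero : ∀ Z : D, IsZero Z → Z ∈ S
  shift : ∀ (n : ℤ), ∀ A ∈ S, A⟦n⟧ ∈ S
  ext₂ : ∀ (T : Triangle D), (T ∈ distTriang D) → T.obj₁ ∈ S → T.obj₃ ∈ S → T.obj₂ ∈ S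

/-- an `m`-extended heart on `D`: a full subcategory of the form
`V^{≥ -(m-1)} ∩ V^{≤ 0}` for some `t`-structure `(V^{≤0}, V^{≥0})` on `D`. -/
def IsExtendedHeart (m : ℤ) (E : Set D) : Prop :=
  ∃ L G : Set D, IsTStructure D L G ∧ E = shiftSet D G (m - 1) ∩ L

/-- the relation `E₁ ≤ E₂` for `m`-extended hearts:
`E₁ ⊆ E₂[m] * E₂` and `E₂ ⊆ E₁ * E₁[-m]`. -/
def extHeartLE (m : ℤ) (E₁ E₂ : Set D) : Prop :=
  E₁ ⊆ starSet D (shiftSet D E₂ m) E₂ ∧ E₂ ⊆ starSet D E₁ (shiftSet D E₁ (-m))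

/-!
Shifting the interval `D^{[a,b]} = D^{≥a} ∩ D^{≤b}` of a t-structure by `n` gives `D^{[a-n,b-n]}`,
so `m-ℋ[n] = D^{[1-m-n,-n]}`. Truncation triangles show `D^{[p,q]} * D^{[q+1,r]} = D^{[p,r]}`
whenever `p ≤ q + 1` and `q ≤ r`, so both triple products collapse to intervals:
the left-hand side is `D^{[1-2m,m]} ∩ D^{[1-m,2m]} = D^{[1-m,m]}`, and so is `m-ℋ * m-ℋ[-m]`.
-/

namespace isoClosed

variable {C : Type*} [Category C] {S : Set C}

lemma mem_iff (hS : isoClosed C S) {A B : C} (e : A ≅ B) : A ∈ S ↔ B ∈ S :=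
  ⟨hS e, hS e.symm⟩

lemma mem_shiftSet_iff [HasShift C ℤ] (hS : isoClosed C S) {n k : ℤ} (h : n + k = 0) {A : C} :
    A ∈ shiftSet C S n ↔ A⟦k⟧ ∈ S := by
  constructor
  · rintro ⟨B, hB, ⟨e⟩⟩
    exact hS ((shiftFunctor C k).mapIso e ≪≫ (shiftFunctorCompIsoId C n k h).app B).symm hB
  · intro hA
    exact ⟨A⟦k⟧, hA, ⟨((shiftFunctorCompIsoId C k n (by omega)).app A).symm⟩⟩

end isoClosed

open Triangulated

section

variable {C : Type*} [Category C] [Preadditive C] [HasZeroObject C] [HasShift C ℤ]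
  [∀ n : ℤ, (shiftFunctor C n).Additive] [Pretriangulated C]

namespace IsTStructure

variable {L G : Set C} (hU : IsTStructure C L G)
include hU

lemma isoClosed_le : isoClosed C L := fun _ _ e h => hU.isoL e h trivial

lemma isoClosed_ge : isoClosed C G := fun _ _ e h => hU.isoG e h trivial

def toTStructure : TStructure C where
  le n X := X⟦n⟧ ∈ L
  ge n X := X⟦n⟧ ∈ G
  le_isClosedUnderIsomorphisms n := ⟨fun e => hU.isoClosed_le ((shiftFunctor C n).mapIso e)⟩
  ge_isClosedUnderIsomorphisms n := ⟨fun e => hU.isoClosed_ge ((shiftFunctor C n).mapIso e)⟩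
  le_shift n a n' h X hX := hU.isoClosed_le ((shiftFunctorAdd' C a n' n h).app X) hX
  ge_shift n a n' h X hX := hU.isoClosed_ge ((shiftFunctorAdd' C a n' n h).app X) hX
  zero' X Y f hX hY :=
    hU.hom_zero X (hU.isoClosed_le ((shiftFunctorZero C ℤ).app X) hX) Y
      ((hU.isoClosed_ge.mem_shiftSet_iff (by norm_num)).2 hY) f
  le_zero_le X hX := by
    have hXL : X ∈ L := hU.isoClosed_le ((shiftFunctorZero C ℤ).app X) hX
    exact (hU.isoClosed_le.mem_shiftSet_iff (by norm_num)).1 (hU.shiftL hXL)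
  ge_one_le X hX := by
    have hXG : X ∈ G := hU.shiftG ((hU.isoClosed_ge.mem_shiftSet_iff (by norm_num)).2 hX)
    exact hU.isoClosed_ge ((shiftFunctorZero C ℤ).app X).symm hXG
  exists_triangle_zero_one A := by
    obtain ⟨X, Y, f, g, h, hX, hY, hT⟩ := hU.cover A trivial
    exact ⟨X, Y, hU.isoClosed_le ((shiftFunctorZero C ℤ).app X).symm hX,
      (hU.isoClosed_ge.mem_shiftSet_iff (by norm_num)).1 hY, f, g, h, hT⟩

end IsTStructure

namespace CategoryTheory.Triangulated.TStructure

variable (t : TStructure C)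

def interval (a b : ℤ) : Set C := {X | t.IsGE X a ∧ t.IsLE X b}

lemma isoClosed_interval (a b : ℤ) : isoClosed C (t.interval a b) := by
  rintro X Y e ⟨_, _⟩
  exact ⟨t.isGE_of_iso e a, t.isLE_of_iso e b⟩

lemma shiftSet_interval (a b n : ℤ) :
    shiftSet C (t.interval a b) n = t.interval (a - n) (b - n) := by
  ext A
  rw [(t.isoClosed_interval a b).mem_shiftSet_iff (add_neg_cancel n)]
  exact and_congr (t.isGE_shift_iff A (a - n) (-n) a) (t.isLE_shift_iff A (b - n) (-n) b)

lemma starSet_interval {p q q' r : ℤ} (hq : q + 1 = q') (hpq : p ≤ q') (hqr : q ≤ r) :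
    starSet C (t.interval p q) (t.interval q' r) = t.interval p r := by
  subst hq
  ext A
  constructor
  · rintro ⟨X, Z, f, g, h, ⟨hXp, _⟩, ⟨_, hZr⟩, hT⟩
    exact ⟨t.isGE₂ _ hT p hXp (t.isGE_of_ge Z p (q + 1)),
      t.isLE₂ _ hT r (t.isLE_of_le X q r) hZr⟩
  · rintro ⟨hAp, hAr⟩
    obtain ⟨X, Z, hXq, hZq, f, g, h, hT⟩ := t.exists_triangle A q (q + 1) rfl
    rw [le_iff_isLE] at hXq
    rw [ge_iff_isGE] at hZq
    have : t.IsGE (Z⟦(-1 : ℤ)⟧) (q + 2) := t.isGE_shift Z (q + 1) (-1) (q + 2)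
    have : t.IsLE (X⟦(1 : ℤ)⟧) (q - 1) := t.isLE_shift X q 1 (q - 1)
    refine ⟨X, Z, f, g, h, ⟨?_, hXq⟩, ⟨hZq, ?_⟩, hT⟩
    · exact t.isGE₂ _ (inv_rot_of_distTriang _ hT) p (t.isGE_of_ge (Z⟦(-1 : ℤ)⟧) p (q + 2)) hAp
    · exact t.isLE₂ _ (rot_of_distTriang _ hT) r hAr (t.isLE_of_le (X⟦(1 : ℤ)⟧) (q - 1) r)

lemma interval_inter_interval {a b c d : ℤ} (hac : a ≤ c) (hbd : b ≤ d) :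
    t.interval a b ∩ t.interval c d = t.interval c b := by
  ext X
  constructor
  · rintro ⟨⟨_, hb⟩, ⟨hc, _⟩⟩
    exact ⟨hc, hb⟩
  · rintro ⟨_, _⟩
    exact ⟨⟨t.isGE_of_ge X a c, ‹_›⟩, ⟨‹_›, t.isLE_of_le X b d⟩⟩

end CategoryTheory.Triangulated.TStructure

lemma IsTStructure.shiftSet_inter_eq_interval {L G : Set C} (hU : IsTStructure C L G)
    {a b : ℤ} (h : a + b = 0) : shiftSet C G a ∩ L = hU.toTStructure.interval b 0 := by
  ext A
  refine and_congr ((hU.isoClosed_ge.mem_shiftSet_iff h).trans ?_) ?_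
  · exact hU.toTStructure.ge_iff_isGE A b
  · exact (hU.isoClosed_le.mem_iff ((shiftFunctorZero C ℤ).app A)).symm.trans
      (hU.toTStructure.le_iff_isLE A 0)

end

/-- Lemma 4.3 (4):
`(m-ℋ[m] * m-ℋ * m-ℋ[-m]) ∩ (m-ℋ * m-ℋ[-m] * m-ℋ[-2m]) = m-ℋ * m-ℋ[-m]`. -/
theorem stmt11 (L G : Set D) (hU : IsTStructure D L G) (m : ℤ) (hm : 1 ≤ m)
    (H : Set D) (hH : H = shiftSet D G (m - 1) ∩ L) :
    starSet D (shiftSet D H m) (starSet D H (shiftSet D H (-m))) ∩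
      starSet D H (starSet D (shiftSet D H (-m)) (shiftSet D H (-(2 * m)))) =
    starSet D H (shiftSet D H (-m)) := by
  have hH₀ : H = hU.toTStructure.interval (1 - m) 0 :=
    hH.trans (hU.shiftSet_inter_eq_interval (by ring))
  subst hH₀
  simp only [TStructure.shiftSet_interval]
  rw [TStructure.starSet_interval, TStructure.starSet_interval, TStructure.starSet_interval,
    TStructure.starSet_interval, TStructure.interval_inter_interval]
  all_goals omega
end

section
/- Let D be a triangulated category, m a positive integer, and let ℰ1, ℰ2 be m-extended hearts on D such that ℰ1 ≤ ℰ2 and ℰ2 ≤ ℰ1 (i.e. ℰ1 ⊆ ℰ2[m] * ℰ2, ℰ2 ⊆ ℰ1 * ℰ1[-m], ℰ2 ⊆ ℰ1[m] * ℰ1 and ℰ1 ⊆ ℰ2 * ℰ2[-m]). Then ℰ1 = ℰ2. -/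
open CategoryTheory Category Limits Pretriangulated

universe v u

variable (D : Type u) [Category.{v} D] [Preadditive D] [HasZeroObject D]
  [HasShift D ℤ] [∀ n : ℤ, (shiftFunctor D n).Additive]
  [Pretriangulated D] [HasBinaryBiproducts D]

/-! Write `ℰ₂ = G[m-1] ∩ L` for a t-structure `(L, G)`. Since `L` is the left orthogonal of
`G[-1]` and `G[-1]` the right orthogonal of `L`, both are closed under extensions, hence so is
every shift of `G[-1]`, in particular `G[m-1]`. For `X ∈ ℰ₁`, the triangle
`ℰ₂[m] → X → ℰ₂` has both ends in `L`, and the triangle `ℰ₂ → X → ℰ₂[-m]` has both ends in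
`G[m-1]`, so `X ∈ ℰ₂`; by symmetry `ℰ₁ = ℰ₂`. -/

section ShiftSet

variable {D}
omit [Preadditive D] [HasZeroObject D] [∀ n : ℤ, (shiftFunctor D n).Additive]
  [Pretriangulated D] [HasBinaryBiproducts D]

lemma mem_shiftSet_of_iso {S : Set D} {n : ℤ} {A B : D} (e : A ≅ B)
    (hB : B ∈ shiftSet D S n) : A ∈ shiftSet D S n := by
  obtain ⟨C, hC, ⟨e'⟩⟩ := hB
  exact ⟨C, hC, ⟨e ≪≫ e'⟩⟩

lemma isoClosed_shiftSet (S : Set D) (n : ℤ) : isoClosed D (shiftSet D S n) :=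
  fun _ _ e hA => mem_shiftSet_of_iso e.symm hA

lemma shift_mem_shiftSet {S : Set D} {X : D} (hX : X ∈ S) (n : ℤ) : X⟦n⟧ ∈ shiftSet D S n :=
  ⟨X, hX, ⟨Iso.refl _⟩⟩

lemma shiftSet_mono {S T : Set D} (hST : S ⊆ T) (n : ℤ) : shiftSet D S n ⊆ shiftSet D T n :=
  fun _ ⟨B, hB, e⟩ => ⟨B, hST hB, e⟩

lemma shiftSet_zero {S : Set D} (hS : isoClosed D S) : shiftSet D S 0 = S := by
  ext A
  refine ⟨fun ⟨B, hB, ⟨e⟩⟩ => hS (e ≪≫ (shiftFunctorZero D ℤ).app B).symm hB, fun hA => ?_⟩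
  exact ⟨A, hA, ⟨((shiftFunctorZero D ℤ).app A).symm⟩⟩

lemma shiftSet_shiftSet (S : Set D) (a b : ℤ) :
    shiftSet D (shiftSet D S a) b = shiftSet D S (a + b) := by
  ext A
  constructor
  · rintro ⟨B, ⟨C, hC, ⟨e⟩⟩, ⟨e'⟩⟩
    exact ⟨C, hC, ⟨e' ≪≫ (shiftFunctor D b).mapIso e ≪≫ ((shiftFunctorAdd D a b).app C).symm⟩⟩
  · rintro ⟨C, hC, ⟨e⟩⟩
    exact ⟨C⟦a⟧, shift_mem_shiftSet hC a, ⟨e ≪≫ (shiftFunctorAdd D a b).app C⟩⟩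

lemma shiftSet_antitone {S : Set D} (hS : shiftSet D S 1 ⊆ S) {a b : ℤ} (hab : a ≤ b) :
    shiftSet D S b ⊆ shiftSet D S a := by
  induction b, hab using Int.leInduction with
  | base => rfl
  | succ b _ ih =>
    calc shiftSet D S (b + 1) = shiftSet D (shiftSet D S 1) b := by
          rw [shiftSet_shiftSet, add_comm]
      _ ⊆ shiftSet D S b := shiftSet_mono hS b
      _ ⊆ shiftSet D S a := ih

lemma shiftSet_monotone {S : Set D} (hS : shiftSet D S (-1) ⊆ S) {a b : ℤ} (hab : a ≤ b) :
    shiftSet D S a ⊆ shiftSet D S b := by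
  induction b, hab using Int.leInduction with
  | base => rfl
  | succ b _ ih =>
    calc shiftSet D S a ⊆ shiftSet D S b := ih
      _ = shiftSet D (shiftSet D S (-1)) (b + 1) := by rw [shiftSet_shiftSet]; ring_nf
      _ ⊆ shiftSet D S (b + 1) := shiftSet_mono hS (b + 1)

end ShiftSet

section StarSet

variable {D}
omit [HasBinaryBiproducts D]

lemma starSet_mono {S S' T T' : Set D} (hS : S ⊆ S') (hT : T ⊆ T') :
    starSet D S T ⊆ starSet D S' T' :=
  fun _ ⟨B, C, f, g, h, hB, hC, hT'⟩ => ⟨B, C, f, g, h, hS hB, hT hC, hT'⟩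

lemma shift_mem_starSet {S T : Set D} {X : D} (hX : X ∈ starSet D S T) (n : ℤ) :
    X⟦n⟧ ∈ starSet D (shiftSet D S n) (shiftSet D T n) := by
  obtain ⟨B, C, f, g, h, hB, hC, hT⟩ := hX
  exact ⟨_, _, _, _, _, shift_mem_shiftSet hB n, shift_mem_shiftSet hC n,
    Triangle.shift_distinguished _ hT n⟩

lemma starSet_shiftSet_subset {S : Set D} (hS : isoClosed D S) (hext : starSet D S S ⊆ S)
    (n : ℤ) : starSet D (shiftSet D S n) (shiftSet D S n) ⊆ shiftSet D S n := by
  intro X hX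
  have hX' := shift_mem_starSet hX (-n)
  rw [shiftSet_shiftSet, add_neg_cancel, shiftSet_zero hS] at hX'
  exact ⟨X⟦-n⟧, hext hX', ⟨(shiftNegShift X n).symm⟩⟩

lemma homZero_starSet_left {S T Y : Set D} (hS : homZero D S Y) (hT : homZero D T Y) :
    homZero D (starSet D S T) Y := by
  rintro X ⟨B, C, f, g, h, hB, hC, hTr⟩ Z hZ u
  obtain ⟨v, rfl⟩ := Triangle.yoneda_exact₂ _ hTr u (hS B hB Z hZ _)
  rw [hT C hC Z hZ v]
  exact comp_zero

lemma homZero_starSet_right {S T Y : Set D} (hS : homZero D Y S) (hT : homZero D Y T) :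
    homZero D Y (starSet D S T) := by
  rintro Z hZ X ⟨B, C, f, g, h, hB, hC, hTr⟩ u
  obtain ⟨v, rfl⟩ := Triangle.coyoneda_exact₂ _ hTr u (hT Z hZ C hC _)
  rw [hS Z hZ B hB v]
  exact zero_comp

end StarSet

namespace IsTStructure

variable {D} {L G : Set D} (ht : IsTStructure D L G)
include ht
omit [HasBinaryBiproducts D]

lemma isoClosed_L : isoClosed D L := fun _ _ e hA => ht.isoL e hA trivial

lemma shiftSet_L_subset {n : ℤ} (hn : 0 ≤ n) : shiftSet D L n ⊆ L := by
  have h₁ : shiftSet D L 1 ⊆ L :=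
    calc shiftSet D L 1 ⊆ shiftSet D (shiftSet D L (-1)) 1 := shiftSet_mono ht.shiftL 1
      _ = L := by rw [shiftSet_shiftSet, neg_add_cancel, shiftSet_zero ht.isoClosed_L]
  exact (shiftSet_antitone h₁ hn).trans (shiftSet_zero ht.isoClosed_L).le

lemma shiftSet_G_mono {a b : ℤ} (hab : a ≤ b) : shiftSet D G a ⊆ shiftSet D G b :=
  shiftSet_monotone ht.shiftG hab

lemma subset_L_of_homZero {S : Set D} (hS : homZero D S (shiftSet D G (-1))) : S ⊆ L := by
  intro X hX
  obtain ⟨B, C, f, g, h, hB, hC, hT⟩ := ht.cover X trivial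
  -- `g = 0`, so `𝟙 C` factors through `B⟦1⟧ ∈ L`, which admits no nonzero map to `C`.
  obtain ⟨v, hv⟩ := Triangle.yoneda_exact₃ _ hT (𝟙 C) (by
    change g ≫ 𝟙 C = 0
    rw [hS X hX C hC g]
    exact zero_comp)
  have hC₀ : IsZero C := by
    rw [IsZero.iff_id_eq_zero, hv,
      ht.hom_zero _ (ht.shiftSet_L_subset zero_le_one (shift_mem_shiftSet hB 1)) C hC v]
    exact comp_zero
  have : IsIso f := (Triangle.isZero₃_iff_isIso₁ _ hT).1 hC₀
  exact ht.isoL (asIso f) hB trivial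

lemma subset_shiftSet_G_of_homZero {S : Set D} (hS : homZero D L S) :
    S ⊆ shiftSet D G (-1) := by
  intro X hX
  obtain ⟨B, C, f, g, h, hB, hC, hT⟩ := ht.cover X trivial
  -- `f = 0`, so `𝟙 (B⟦1⟧)` factors through `C`, which receives no nonzero map from `B⟦1⟧ ∈ L`.
  obtain ⟨v, hv⟩ := Triangle.coyoneda_exact₁ (Triangle.mk f g h) hT (𝟙 (B⟦(1 : ℤ)⟧)) (by
    change 𝟙 _ ≫ f⟦(1 : ℤ)⟧' = 0
    rw [hS B hB X hX f, Functor.map_zero]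
    exact comp_zero)
  have hB₀ : IsZero B := by
    refine IsZero.of_full_of_faithful_of_isZero (shiftFunctor D (1 : ℤ)) B ?_
    rw [IsZero.iff_id_eq_zero, hv,
      ht.hom_zero _ (ht.shiftSet_L_subset zero_le_one (shift_mem_shiftSet hB 1)) C hC v]
    exact zero_comp
  have : IsIso g := (Triangle.isZero₁_iff_isIso₂ _ hT).1 hB₀
  exact mem_shiftSet_of_iso (asIso g) hC

lemma starSet_L_subset : starSet D L L ⊆ L :=
  ht.subset_L_of_homZero (homZero_starSet_left ht.hom_zero ht.hom_zero)

lemma starSet_shiftSet_G_subset (n : ℤ) :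
    starSet D (shiftSet D G n) (shiftSet D G n) ⊆ shiftSet D G n := by
  have hext : starSet D (shiftSet D G (-1)) (shiftSet D G (-1)) ⊆ shiftSet D G (-1) :=
    ht.subset_shiftSet_G_of_homZero (homZero_starSet_right ht.hom_zero ht.hom_zero)
  have h := starSet_shiftSet_subset (isoClosed_shiftSet G (-1)) hext (n + 1)
  rwa [shiftSet_shiftSet, neg_add_cancel_comm_assoc] at h

end IsTStructure

section ExtendedHeart

variable {D}
omit [HasBinaryBiproducts D]

lemma IsExtendedHeart.subset_of_subset_starSet {m : ℤ} (hm : 0 ≤ m) {E₁ E₂ : Set D}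
    (h₂ : IsExtendedHeart D m E₂) (hE₁ : E₁ ⊆ starSet D (shiftSet D E₂ m) E₂)
    (hE₁' : E₁ ⊆ starSet D E₂ (shiftSet D E₂ (-m))) : E₁ ⊆ E₂ := by
  obtain ⟨L, G, ht, rfl⟩ := h₂
  intro X hX
  constructor
  · have hshift : shiftSet D (shiftSet D G (m - 1) ∩ L) (-m) ⊆ shiftSet D G (m - 1) :=
      calc shiftSet D (shiftSet D G (m - 1) ∩ L) (-m)
          ⊆ shiftSet D (shiftSet D G (m - 1)) (-m) := shiftSet_mono Set.inter_subset_left _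
        _ = shiftSet D G (-1) := by rw [shiftSet_shiftSet]; ring_nf
        _ ⊆ shiftSet D G (m - 1) := ht.shiftSet_G_mono (by omega)
    exact ht.starSet_shiftSet_G_subset (m - 1)
      (starSet_mono Set.inter_subset_left hshift (hE₁' hX))
  · have hshift : shiftSet D (shiftSet D G (m - 1) ∩ L) m ⊆ L :=
      (shiftSet_mono Set.inter_subset_right m).trans (ht.shiftSet_L_subset hm)
    exact ht.starSet_L_subset (starSet_mono hshift Set.inter_subset_right (hE₁ hX))

end ExtendedHeart

/-- antisymmetry of `≤` on `m`-extended hearts: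
if `ℰ₁ ≤ ℰ₂` and `ℰ₂ ≤ ℰ₁`, then `ℰ₁ = ℰ₂`. -/
theorem stmt12 (m : ℤ) (hm : 1 ≤ m) (E₁ E₂ : Set D)
    (h₁ : IsExtendedHeart D m E₁) (h₂ : IsExtendedHeart D m E₂)
    (h12 : extHeartLE D m E₁ E₂) (h21 : extHeartLE D m E₂ E₁) :
    E₁ = E₂ :=
  Set.Subset.antisymm (h₂.subset_of_subset_starSet (by omega) h12.1 h21.2)
    (h₁.subset_of_subset_starSet (by omega) h21.1 h12.2)
end
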